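/- arXiv:1301.3659 — 2 statements merged into one kernel-verified Lean document; each statement's English description precedes it below -/
import Mathlib

section
/- For every positive integer n, ζ(2n+1) = lim_{q→∞} (π/(2q))^{2n+1} · Σ_{p=1}^{q} cot^{2n+1}(pπ/(2q+1)). -/
/-!
For fixed `p`, `(π / (2q)) cot (pπ / (2q + 1)) → 1 / p` as `q → ∞`, because `x cot x → 1` as
`x → 0`. On `(0, π/2)` we have `0 < cot x < 1 / x`, which bounds the `p`-th term by
`(3 / (2p)) ^ (2n + 1)`; this is summable since `2n + 1 ≥ 2`, so by Tannery's theorem the limit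
may be taken termwise, giving `∑ 1 / p ^ (2n + 1)`.
-/

open Real Filter Finset Topology

namespace Real

lemma cot_pos_of_pos_of_lt_pi_div_two {x : ℝ} (h0 : 0 < x) (h : x < π / 2) : 0 < cot x := by
  rw [← inv_inv (cot x), cot_inv_eq_tan]
  exact inv_pos.mpr (tan_pos_of_pos_of_lt_pi_div_two h0 h)

lemma cot_lt_inv_of_pos_of_lt_pi_div_two {x : ℝ} (h0 : 0 < x) (h : x < π / 2) :
    cot x < x⁻¹ := by
  rw [← inv_inv (cot x), cot_inv_eq_tan]
  exact inv_strictAnti₀ h0 (lt_tan h0 h)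

lemma mul_cot_eq_cos_div_sinc {x : ℝ} (hx : x ≠ 0) : x * cot x = cos x / sinc x := by
  rw [sinc_of_ne_zero hx, cot_eq_cos_div_sin, div_div_eq_mul_div, mul_div_assoc', mul_comm]

lemma tendsto_mul_cot_of_tendsto_zero {α : Type*} {l : Filter α} {f : α → ℝ}
    (hf : Tendsto f l (𝓝 0)) (hf0 : ∀ᶠ a in l, f a ≠ 0) :
    Tendsto (fun a => f a * cot (f a)) l (𝓝 1) := by
  have hcont : Tendsto (fun x => cos x / sinc x) (𝓝 0) (𝓝 (cos 0 / sinc 0)) :=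
    (continuous_cos.tendsto 0).div (continuous_sinc.tendsto 0)
      (by rw [sinc_zero]; exact one_ne_zero)
  rw [cos_zero, sinc_zero, div_one] at hcont
  exact (hcont.comp hf).congr' (hf0.mono fun a ha => (mul_cot_eq_cos_div_sinc ha).symm)

end Real

lemma tendsto_pi_div_mul_cot {c : ℝ} (hc : 0 < c) :
    Tendsto (fun q : ℕ => π / (2 * q) * cot (c * π / (2 * q + 1))) atTop (𝓝 c⁻¹) := by
  have hangle : Tendsto (fun q : ℕ => c * π / (2 * q + 1)) atTop (𝓝 0) :=
    tendsto_const_nhds.div_atTop <| tendsto_atTop_add_const_right _ _ <|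
      tendsto_natCast_atTop_atTop.const_mul_atTop (two_pos : (0 : ℝ) < 2)
  have hratio : Tendsto (fun q : ℕ => 1 + (2 * (q : ℝ))⁻¹) atTop (𝓝 1) := by
    simpa using tendsto_const_nhds.add (tendsto_inv_atTop_zero.comp <|
      tendsto_natCast_atTop_atTop.const_mul_atTop (two_pos : (0 : ℝ) < 2))
  -- `π / (2q) = (1 + (2q)⁻¹) · c⁻¹ · (cπ / (2q + 1))`
  have hmul := (hratio.mul_const c⁻¹).mul <| tendsto_mul_cot_of_tendsto_zero hangle <|
    Eventually.of_forall fun q => by positivity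
  rw [one_mul, mul_one] at hmul
  refine hmul.congr' ((eventually_ge_atTop 1).mono fun q hq => ?_)
  have hq : (0 : ℝ) < q := by exact_mod_cast hq
  field_simp

lemma abs_pi_div_mul_cot_le {c : ℝ} {q : ℕ} (hc : 0 < c) (hcq : c ≤ q) :
    |π / (2 * q) * cot (c * π / (2 * q + 1))| ≤ 3 / (2 * c) := by
  have hq : (1 : ℝ) ≤ q := by exact_mod_cast Nat.cast_pos.mp (hc.trans_le hcq)
  set x := c * π / (2 * q + 1) with hx
  have hx0 : 0 < x := by positivity
  have hxπ : x < π / 2 := by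
    rw [hx, div_lt_div_iff₀ (by positivity) two_pos]
    nlinarith [pi_pos]
  have hcot := cot_lt_inv_of_pos_of_lt_pi_div_two hx0 hxπ
  rw [abs_of_pos (mul_pos (by positivity) (cot_pos_of_pos_of_lt_pi_div_two hx0 hxπ))]
  calc π / (2 * q) * cot x ≤ π / (2 * q) * x⁻¹ := by gcongr
    _ = (2 * q + 1) / (2 * q * c) := by rw [hx]; field_simp
    _ ≤ 3 / (2 * c) := by
      rw [div_le_div_iff₀ (by positivity) (by positivity)]
      nlinarith

lemma tendsto_sum_range_of_dominated {G : Type*} [NormedAddCommGroup G] [CompleteSpace G]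
    {f : ℕ → ℕ → G} {g : ℕ → G} {bound : ℕ → ℝ} (h_sum : Summable bound)
    (hab : ∀ k, Tendsto (f · k) atTop (𝓝 (g k))) (h_bound : ∀ q, ∀ k < q, ‖f q k‖ ≤ bound k) :
    Tendsto (fun q => ∑ k ∈ range q, f q k) atTop (𝓝 (∑' k, g k)) := by
  have hlim := tendsto_tsum_of_dominated_convergence (f := fun q k => if k < q then f q k else 0)
    h_sum (fun k => (hab k).congr' ((eventually_gt_atTop k).mono fun q hq => (if_pos hq).symm))
    (Eventually.of_forall fun q k => by
      split_ifs with hk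
      · exact h_bound q k hk
      · simpa using (norm_nonneg _).trans (h_bound (k + 1) k k.lt_succ_self))
  refine hlim.congr fun q => ?_
  rw [tsum_eq_sum (s := range q) fun k hk => if_neg (by simpa using hk)]
  exact sum_congr rfl fun k hk => if_pos (mem_range.mp hk)

theorem zeta_odd_cot_limit (n : ℕ) (hn : 0 < n) :
    Tendsto (fun q : ℕ =>
        (π / (2 * q)) ^ (2 * n + 1) *
          ∑ p ∈ Finset.Icc 1 q, (Real.cot (p * π / (2 * q + 1))) ^ (2 * n + 1))
      atTop (nhds (∑' k : ℕ, 1 / ((k : ℝ) + 1) ^ (2 * n + 1))) := by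
  set m := 2 * n + 1
  have hsum : Summable fun k : ℕ => (3 / (2 * ((k : ℝ) + 1))) ^ m := by
    have hp : Summable fun k : ℕ => 1 / ((k + 1 : ℕ) : ℝ) ^ m :=
      (summable_nat_add_iff 1).mpr (Real.summable_one_div_nat_pow.mpr (by omega))
    refine (hp.mul_left ((3 / 2) ^ m)).congr fun k => ?_
    push_cast
    rw [mul_one_div, ← div_pow, div_div]
  have hlim := tendsto_sum_range_of_dominated hsum
    (f := fun q k => (π / (2 * q) * cot (((k : ℝ) + 1) * π / (2 * q + 1))) ^ m)
    (g := fun k => 1 / ((k : ℝ) + 1) ^ m)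
    (fun k => by simpa [inv_pow] using (tendsto_pi_div_mul_cot k.cast_add_one_pos).pow m)
    (fun q k hk => by
      rw [norm_pow, norm_eq_abs]
      exact pow_le_pow_left₀ (abs_nonneg _)
        (abs_pi_div_mul_cot_le k.cast_add_one_pos (by exact_mod_cast hk)) m)
  refine hlim.congr fun q => ?_
  rw [mul_sum, ← Ico_add_one_right_eq_Icc, sum_Ico_eq_sum_range, Nat.add_sub_cancel]
  refine sum_congr rfl fun k _ => ?_
  push_cast
  rw [mul_pow, add_comm 1]
end

section
/- For every positive integer n, ζ(2n) = lim_{q→∞} (π/(2q))^{2n} · Σ_{p=1}^{q} csc^{2n}(pπ/(2q+1)). -/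
/-!
For `1 ≤ p ≤ q` the angle `θ = pπ/(2q+1)` lies in `(0, π/2]`, so Jordan's inequality
`sin θ ≥ 2θ/π` bounds `(π/(2q)) csc θ` by `(3π/4)/p` uniformly in `q`, while for fixed `p` it
tends to `1/p` because `sin x ~ x`. Tannery's theorem then passes the limit through the sum.
-/

open Real Filter Finset

open scoped Topology

theorem tendsto_sum_range_of_dominated_convergence {G : Type*} [NormedAddCommGroup G]
    [CompleteSpace G] {f : ℕ → ℕ → G} {g : ℕ → G} {bound : ℕ → ℝ} (h_sum : Summable bound)
    (hab : ∀ k, Tendsto (f · k) atTop (𝓝 (g k)))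
    (h_bound : ∀ᶠ n in atTop, ∀ k < n, ‖f n k‖ ≤ bound k) :
    Tendsto (fun n ↦ ∑ k ∈ range n, f n k) atTop (𝓝 (∑' k, g k)) := by
  refine (tendsto_tsum_of_dominated_convergence (f := fun n ↦ (range n : Set ℕ).indicator (f n))
    h_sum (fun k ↦ ?_) ?_).congr fun n ↦ (sum_eq_tsum_indicator _ _).symm
  · refine (hab k).congr' ?_
    filter_upwards [eventually_gt_atTop k] with n hn
    simp [hn]
  · filter_upwards [h_bound] with n hn k
    by_cases hk : k < n
    · simpa [hk] using hn k hk
    · obtain ⟨N, hN, hkN⟩ := (h_bound.and (eventually_gt_atTop k)).exists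
      simpa [hk] using (norm_nonneg _).trans (hN k hkN)

theorem inv_sin_le_of_pos_of_le_pi_div_two {θ : ℝ} (hθ₀ : 0 < θ) (hθ : θ ≤ π / 2) :
    (sin θ)⁻¹ ≤ π / (2 * θ) := by
  calc (sin θ)⁻¹ ≤ (2 / π * θ)⁻¹ := inv_anti₀ (by positivity) (mul_le_sin hθ₀.le hθ)
    _ = π / (2 * θ) := by field_simp

theorem abs_pi_div_mul_inv_sin_le {q c : ℝ} (hq : 1 ≤ q) (hc : 0 < c) (hcq : c ≤ q) :
    |π / (2 * q) * (sin (c * π / (2 * q + 1)))⁻¹| ≤ 3 * π / 4 / c := by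
  have hθ₀ : 0 < c * π / (2 * q + 1) := by positivity
  have hθ : c * π / (2 * q + 1) ≤ π / 2 := by
    rw [div_le_div_iff₀ (by positivity) two_pos]
    nlinarith [pi_pos]
  have hsin : 0 < sin (c * π / (2 * q + 1)) :=
    sin_pos_of_pos_of_lt_pi hθ₀ (hθ.trans_lt (by linarith [pi_pos]))
  rw [abs_of_pos (by positivity)]
  calc π / (2 * q) * (sin (c * π / (2 * q + 1)))⁻¹
      ≤ π / (2 * q) * (π / (2 * (c * π / (2 * q + 1)))) := by
        gcongr
        exact inv_sin_le_of_pos_of_le_pi_div_two hθ₀ hθ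
    _ = π / 4 / c * ((2 * q + 1) / q) := by field_simp; ring
    _ ≤ π / 4 / c * 3 := by
        gcongr
        rw [div_le_iff₀ (by positivity)]
        linarith
    _ = 3 * π / 4 / c := by ring

theorem tendsto_pi_div_mul_inv_sin {c : ℝ} (hc : c ≠ 0) :
    Tendsto (fun q : ℕ ↦ π / (2 * q) * (sin (c * π / (2 * q + 1)))⁻¹) atTop (𝓝 c⁻¹) := by
  have hθ : Tendsto (fun q : ℕ ↦ c * π / (2 * q + 1)) atTop (𝓝 0) :=
    tendsto_const_nhds.div_atTop <| tendsto_atTop_add_const_right _ _ <|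
      tendsto_natCast_atTop_atTop.const_mul_atTop two_pos
  have hsinc : Tendsto (fun q : ℕ ↦ sinc (c * π / (2 * q + 1))) atTop (𝓝 1) :=
    (continuous_sinc.tendsto' 0 1 sinc_zero).comp hθ
  have h := ((tendsto_natCast_div_add_atTop (1 / 2 : ℝ)).mul hsinc).inv₀ (by norm_num)
    |>.const_mul c⁻¹
  rw [one_mul, inv_one, mul_one] at h
  refine h.congr' ?_
  -- `q / (q + 1/2) * sinc θ = 2q sin θ / (cπ)` for `θ = cπ/(2q+1) ≠ 0`
  filter_upwards [eventually_gt_atTop 0] with q hq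
  have hq' : (0 : ℝ) < q := by exact_mod_cast hq
  rw [sinc_of_ne_zero (by positivity)]
  field_simp

theorem zeta_even_csc_limit (n : ℕ) (hn : 0 < n) :
    Tendsto (fun q : ℕ =>
        (π / (2 * q)) ^ (2 * n) *
          ∑ p ∈ Finset.Icc 1 q, ((Real.sin (p * π / (2 * q + 1)))⁻¹) ^ (2 * n))
      atTop (nhds (∑' k : ℕ, 1 / ((k : ℝ) + 1) ^ (2 * n))) := by
  have h_sum : Summable fun k : ℕ ↦ 1 / ((k : ℝ) + 1) ^ (2 * n) := by
    simpa using (summable_nat_add_iff 1).2 (summable_one_div_nat_pow.2 (by omega : 1 < 2 * n))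
  set f : ℕ → ℕ → ℝ := fun q k ↦ (π / (2 * q) * (sin ((k + 1 : ℕ) * π / (2 * q + 1)))⁻¹) ^ (2 * n)
  have h_pointwise (k : ℕ) : Tendsto (f · k) atTop (𝓝 (((k + 1 : ℕ) : ℝ)⁻¹ ^ (2 * n))) :=
    (tendsto_pi_div_mul_inv_sin (by positivity)).pow (2 * n)
  have h_dominated : ∀ᶠ q in atTop, ∀ k < q,
      ‖f q k‖ ≤ (3 * π / 4) ^ (2 * n) * (1 / ((k : ℝ) + 1) ^ (2 * n)) := by
    filter_upwards [eventually_ge_atTop 1] with q hq k hk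
    have hkq : ((k + 1 : ℕ) : ℝ) ≤ q := by exact_mod_cast hk
    calc ‖f q k‖ ≤ (3 * π / 4 / (k + 1 : ℕ)) ^ (2 * n) := by
          rw [norm_pow, Real.norm_eq_abs]
          gcongr
          exact abs_pi_div_mul_inv_sin_le (by exact_mod_cast hq) (by positivity) hkq
      _ = (3 * π / 4) ^ (2 * n) * (1 / ((k : ℝ) + 1) ^ (2 * n)) := by push_cast; ring
  convert tendsto_sum_range_of_dominated_convergence (h_sum.mul_left _) h_pointwise h_dominated
    using 2 with q
  · rw [mul_sum, ← Ico_add_one_right_eq_Icc, sum_Ico_eq_sum_range, add_tsub_cancel_right]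
    simp only [f, add_comm 1, mul_pow]
  · simp [inv_pow]
end
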